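/- The Choi map Λ: M_3(ℂ) → M_3(ℂ), Λ((a_{ij})) = (1/2)·[[a_{11}+a_{22}, −a_{12}, −a_{13}], [−a_{21}, a_{22}+a_{33}, −a_{23}], [−a_{31}, −a_{32}, a_{33}+a_{11}]], is not completely positive: the operator (Λ ⊗ id_{M_3})(|Ω⟩⟨Ω|), where |Ω⟩ = Σ_{i=0}^{2} |i⟩|i⟩, has a negative eigenvalue. -/

import Mathlib

/-!
The Choi map commutes with `ᴴ` and `E_{jl}ᴴ = E_{lj}`, so the Choi matrix `C` is Hermitian. The
maximally entangled vector `|Ω⟩` is an eigenvector of `C` with eigenvalue `-1/2`: the `(j,j)` entry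
of `C|Ω⟩` is `Σ_k Λ(E_{jk})_{jk} = 1/2 - 1/2 - 1/2`, and its off-diagonal entries vanish.
-/

noncomputable section

/-- The (normalized) Choi map `Λ : M_3(ℂ) → M_3(ℂ)` of Eq. (7). -/
def choiMap (A : Matrix (Fin 3) (Fin 3) ℂ) : Matrix (Fin 3) (Fin 3) ℂ :=
  (2 : ℂ)⁻¹ • !![A 0 0 + A 1 1, -A 0 1, -A 0 2;
                 -A 1 0, A 1 1 + A 2 2, -A 1 2;
                 -A 2 0, -A 2 1, A 2 2 + A 0 0]

/-- The Choi matrix `(Λ ⊗ id)(|Ω⟩⟨Ω|)` of the Choi map, where `|Ω⟩ = Σ_i |i⟩|i⟩`: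
its `((i,j),(k,l))` entry is `Λ(E_{ik})_{jl}` rearranged blockwise, i.e. the block `(i,j)`
of `Σ_{i,k} Λ(E_{ik}) ⊗ E_{ik}`. -/
def choiMatrix : Matrix (Fin 3 × Fin 3) (Fin 3 × Fin 3) ℂ :=
  Matrix.of fun p q => choiMap (Matrix.single p.2 q.2 1) p.1 q.1

open Matrix

open Module.End in
theorem Matrix.IsHermitian.exists_eigenvalues_eq_of_mulVec_eq_smul {𝕜 n : Type*} [RCLike 𝕜]
    [Fintype n] [DecidableEq n] {A : Matrix n n 𝕜} (hA : A.IsHermitian) {v : n → 𝕜}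
    (hv : v ≠ 0) {μ : ℝ} (h : A *ᵥ v = (μ : 𝕜) • v) : ∃ i, hA.eigenvalues i = μ := by
  rw [← Set.mem_range, ← hA.spectrum_real_eq_range_eigenvalues, ← spectrum.algebraMap_mem_iff 𝕜,
    ← spectrum_toLin', ← hasEigenvalue_iff_mem_spectrum]
  exact hasEigenvalue_of_hasEigenvector ⟨mem_eigenspace_iff.mpr (by simpa using h), hv⟩

def maxEntangled (n R : Type*) [DecidableEq n] [Zero R] [One R] : n × n → R :=
  fun p => (1 : Matrix n n R) p.1 p.2

theorem maxEntangled_ne_zero (n R : Type*) [DecidableEq n] [Nonempty n] [MulZeroOneClass R]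
    [Nontrivial R] : maxEntangled n R ≠ 0 := fun h => by
  obtain ⟨i⟩ := ‹Nonempty n›
  simpa [maxEntangled] using congr_fun h (i, i)

theorem choiMap_conjTranspose (A : Matrix (Fin 3) (Fin 3) ℂ) : choiMap Aᴴ = (choiMap A)ᴴ := by
  ext i j
  fin_cases i <;> fin_cases j <;> simp [choiMap, add_comm]

theorem choiMatrix_isHermitian : choiMatrix.IsHermitian := by
  ext ⟨i, j⟩ ⟨k, l⟩
  simp only [conjTranspose_apply, choiMatrix, of_apply]
  rw [← conjTranspose_apply, ← choiMap_conjTranspose, conjTranspose_single, star_one]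

theorem choiMatrix_mulVec_maxEntangled :
    choiMatrix *ᵥ maxEntangled (Fin 3) ℂ = (-2⁻¹ : ℂ) • maxEntangled (Fin 3) ℂ := by
  ext ⟨i, j⟩
  fin_cases i <;> fin_cases j <;>
    simp [mulVec, dotProduct, Fintype.sum_prod_type, Fin.sum_univ_three, choiMatrix, choiMap,
      maxEntangled, single_apply, one_apply]

/-- the Choi map is not completely positive: its Choi matrix
`(Λ ⊗ id)(|Ω⟩⟨Ω|)` has a negative eigenvalue. -/
theorem stmt10 :
    ∃ (h : choiMatrix.IsHermitian) (i : Fin 3 × Fin 3), h.eigenvalues i < 0 := by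
  refine ⟨choiMatrix_isHermitian, ?_⟩
  obtain ⟨i, hi⟩ := choiMatrix_isHermitian.exists_eigenvalues_eq_of_mulVec_eq_smul
    (maxEntangled_ne_zero (Fin 3) ℂ) (μ := -2⁻¹) (by simpa using choiMatrix_mulVec_maxEntangled)
  exact ⟨i, by norm_num [hi]⟩

end
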